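/- arXiv:0910.0110 — 3 statements merged into one kernel-verified Lean document; each statement's English description precedes it below -/
import Mathlib

section
/- Let G=(V,W,E) be a label cover instance with m edges such that no label assignment satisfies more than s edges. Then in the StackSP instance produced by the reduction, every pricing yields revenue at most m + 4s. -/
open scoped ENNReal

/-! ## Label cover instances -/

/-- A label cover instance: a bipartite graph `(V, W, E)` with edge list
`(ve i, we i)` for `i : Fin m`, a label set `Fin k`, and for every edge `i` a
nonempty set `R i` of satisfying label pairs. -/
structure LabelCover where
  V : Type
  W : Type
  m : ℕ
  k : ℕ
  ve : Fin m → V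
  we : Fin m → W
  R : Fin m → Finset (Fin k × Fin k)
  R_nonempty : ∀ i, (R i).Nonempty

namespace LabelCover

/-- The label assignment `(ℓv, ℓw)` satisfies edge `i`. -/
def Sat (I : LabelCover) (ℓv : I.V → Fin I.k) (ℓw : I.W → Fin I.k) (i : Fin I.m) : Prop :=
  (ℓv (I.ve i), ℓw (I.we i)) ∈ I.R i

instance (I : LabelCover) (ℓv : I.V → Fin I.k) (ℓw : I.W → Fin I.k) :
    DecidablePred (I.Sat ℓv ℓw) := fun i =>
  decidable_of_iff ((ℓv (I.ve i), ℓw (I.we i)) ∈ I.R i) Iff.rfl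

/-- The number of edges satisfied by the assignment `(ℓv, ℓw)`. -/
def satCount (I : LabelCover) (ℓv : I.V → Fin I.k) (ℓw : I.W → Fin I.k) : ℕ :=
  (Finset.univ.filter (I.Sat ℓv ℓw)).card

/-- The label pairs `a` on edge `i` and `b` on edge `j` are conflicting. -/
def Conflict (I : LabelCover) (i j : Fin I.m) (a b : Fin I.k × Fin I.k) : Prop :=
  (I.ve i = I.ve j ∧ a.1 ≠ b.1) ∨ (I.we i = I.we j ∧ a.2 ≠ b.2)

/-! ## The StackSP instance produced by the reduction -/

/-- The nodes of the StackSP instance: the gadget boundary nodes `bd i`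
(`bd i.castSucc` is the left endpoint of gadget `i`, `bd i.succ` its right
endpoint; `bd 0 = s`, `bd (last m) = t`), and for every gadget `i` and label
pair `a` the tail `tl i a` and head `hd i a` of the pricable edge `e_{i,a}`. -/
inductive Node (m k : ℕ) where
  | bd (i : Fin (m + 1))
  | tl (i : Fin m) (a : Fin k × Fin k)
  | hd (i : Fin m) (a : Fin k × Fin k)
  deriving DecidableEq

/-- The edges of the StackSP instance: for every gadget `i` and label pair `a`,
the (fixed-cost 0) edge `enter i a` from the left endpoint of gadget `i` to the
tail of the pricable edge `price i a`, the pricable edge itself, and the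
(fixed-cost 0) edge `exit i a` from its head to the right endpoint of gadget `i`;
the parallel fixed-cost-2 edge `skip i` of gadget `i`; and the shortcut edge
`shortcut i j a b` of fixed cost `j - i - 1` from the head of `price i a` to
the tail of `price j b`. -/
inductive Edge (m k : ℕ) where
  | enter (i : Fin m) (a : Fin k × Fin k)
  | price (i : Fin m) (a : Fin k × Fin k)
  | exit (i : Fin m) (a : Fin k × Fin k)
  | skip (i : Fin m)
  | shortcut (i j : Fin m) (a b : Fin k × Fin k)
  deriving DecidableEq

namespace Edge

/-- Source node of an edge (all edges are directed from left to right). -/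
def src {m k : ℕ} : Edge m k → Node m k
  | enter i _ => .bd i.castSucc
  | price i a => .tl i a
  | exit i a => .hd i a
  | skip i => .bd i.castSucc
  | shortcut i _ a _ => .hd i a

/-- Destination node of an edge. -/
def dst {m k : ℕ} : Edge m k → Node m k
  | enter i a => .tl i a
  | price i a => .hd i a
  | exit i _ => .bd i.succ
  | skip i => .bd i.succ
  | shortcut _ j _ b => .tl j b

/-- The pricable edges. -/
def IsPricable {m k : ℕ} : Edge m k → Prop
  | price _ _ => True
  | _ => False

/-- The fixed cost of an edge: `2` for the parallel fixed edge of a gadget,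
`j - i - 1` for a shortcut from gadget `i` to gadget `j`, `0` otherwise
(pricable edges have fixed cost `0`). -/
noncomputable def fixedCost {m k : ℕ} : Edge m k → ℝ≥0∞
  | skip _ => 2
  | shortcut i j _ _ => (((j : ℕ) - (i : ℕ) - 1 : ℕ) : ℝ≥0∞)
  | _ => 0

/-- Whether an edge is a pricable edge of gadget `g` (as a `Bool`). -/
def isPricableOf {m k : ℕ} (g : Fin m) : Edge m k → Bool
  | price i _ => i == g
  | _ => false

end Edge

/-- The edges actually present in the StackSP instance built from `I`:
gadget `i` has edges only for the label pairs in `R i`, and a shortcut from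
gadget `i` to gadget `j` exists precisely when `i < j` and the corresponding
label pairs are conflicting. -/
def EdgeOK (I : LabelCover) : Edge I.m I.k → Prop
  | .enter i a => a ∈ I.R i
  | .price i a => a ∈ I.R i
  | .exit i a => a ∈ I.R i
  | .skip _ => True
  | .shortcut i j a b =>
      (i : ℕ) < (j : ℕ) ∧ a ∈ I.R i ∧ b ∈ I.R j ∧ I.Conflict i j a b

/-- A pricing assigns a nonnegative (possibly infinite) price to every
pricable edge `e_{i,a}`. -/
abbrev Pricing (I : LabelCover) := Fin I.m → Fin I.k × Fin I.k → ℝ≥0∞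

/-- The price contributed by an edge (the price of a pricable edge, `0` for a
fixed-cost edge). -/
noncomputable def priceOf (I : LabelCover) (p : Pricing I) : Edge I.m I.k → ℝ≥0∞
  | .price i a => p i a
  | _ => 0

/-- The total cost of an edge: fixed cost plus price. -/
noncomputable def edgeCost (I : LabelCover) (p : Pricing I) (e : Edge I.m I.k) : ℝ≥0∞ :=
  e.fixedCost + I.priceOf p e

/-- Directed walks in the StackSP instance of `I`, recorded as lists of
consecutive valid edges. -/
inductive Walk (I : LabelCover) : Node I.m I.k → Node I.m I.k → List (Edge I.m I.k) → Prop
  | nil (u : Node I.m I.k) : Walk I u u []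
  | cons {e : Edge I.m I.k} {v : Node I.m I.k} {es : List (Edge I.m I.k)} :
      I.EdgeOK e → Walk I e.dst v es → Walk I e.src v (e :: es)

/-- The source `s` of the instance: the left endpoint of gadget `1`. -/
def source (I : LabelCover) : Node I.m I.k := .bd 0

/-- The sink `t` of the instance: the right endpoint of gadget `m`. -/
def target (I : LabelCover) : Node I.m I.k := .bd (Fin.last I.m)

/-- Total cost (fixed costs plus prices) of a list of edges. -/
noncomputable def cost (I : LabelCover) (p : Pricing I) (es : List (Edge I.m I.k)) : ℝ≥0∞ :=
  (es.map (I.edgeCost p)).sum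

/-- Revenue of a list of edges: the sum of the prices of its pricable edges. -/
noncomputable def revenue (I : LabelCover) (p : Pricing I) (es : List (Edge I.m I.k)) : ℝ≥0∞ :=
  (es.map (I.priceOf p)).sum

/-- Total fixed cost of a list of edges. -/
noncomputable def fixedSum (I : LabelCover) (es : List (Edge I.m I.k)) : ℝ≥0∞ :=
  (es.map Edge.fixedCost).sum

/-- `P` is a minimum-cost directed `s`-`t` path under pricing `p`. -/
def IsOptPath (I : LabelCover) (p : Pricing I) (P : List (Edge I.m I.k)) : Prop :=
  Walk I I.source I.target P ∧
    ∀ Q, Walk I I.source I.target Q → I.cost p P ≤ I.cost p Q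

/-- `P` is the path purchased by the consumer: a minimum-cost `s`-`t` path
which, among minimum-cost paths, maximizes the revenue. -/
def IsPurchased (I : LabelCover) (p : Pricing I) (P : List (Edge I.m I.k)) : Prop :=
  I.IsOptPath p P ∧ ∀ Q, I.IsOptPath p Q → I.revenue p Q ≤ I.revenue p P

/-! ## P-edges, significant gadgets and islands -/

/-- Gadget `g` has a P-edge, i.e. `P` uses a pricable edge of gadget `g`. -/
def HasPEdge (I : LabelCover) (P : List (Edge I.m I.k)) (g : Fin I.m) : Prop :=
  ∃ a, Edge.price g a ∈ P

/-- Gadget `g'` has a P-edge that is joined to the P-edge `e_{g,a}` of gadget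
`g` by a shortcut edge (in particular `g < g'`). -/
def Linked (I : LabelCover) (P : List (Edge I.m I.k)) (g : Fin I.m)
    (a : Fin I.k × Fin I.k) (g' : Fin I.m) : Prop :=
  ∃ b, Edge.price g' b ∈ P ∧ I.EdgeOK (.shortcut g g' a b)

/-- Every pricable edge not on `P` has price `+∞` (the w.l.o.g. normalization). -/
def OffPathInfty (I : LabelCover) (p : Pricing I) (P : List (Edge I.m I.k)) : Prop :=
  ∀ g a, Edge.price g a ∉ P → p g a = ⊤

/-- The length `in_g` of the shortcut edge used by `P` to enter gadget `g`
(`0` if no shortcut is used). -/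
noncomputable def inLen (I : LabelCover) (P : List (Edge I.m I.k)) (g : Fin I.m) : ℕ :=
  if h : ∃ g' : Fin I.m, ∃ a b, Edge.shortcut g' g a b ∈ P then
    (g : ℕ) - (h.choose : ℕ) - 1
  else 0

/-- The length `out_g` of the shortcut edge used by `P` to exit gadget `g`
(`0` if no shortcut is used). -/
noncomputable def outLen (I : LabelCover) (P : List (Edge I.m I.k)) (g : Fin I.m) : ℕ :=
  if h : ∃ g' : Fin I.m, ∃ a b, Edge.shortcut g g' a b ∈ P then
    (h.choose : ℕ) - (g : ℕ) - 1
  else 0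

/-- `P` splits as `P1 ++ M ++ P2` where `P1` goes from `s` to `u`, `M` from `u`
to `v` and `P2` from `v` to `t`. -/
def SplitsAt (I : LabelCover) (P P1 M P2 : List (Edge I.m I.k))
    (u v : Node I.m I.k) : Prop :=
  P = P1 ++ M ++ P2 ∧ Walk I I.source u P1 ∧ Walk I u v M ∧ Walk I v I.target P2

/-- The sequence `σ 0 < σ 1 < … < σ (r-1)` of significant gadgets of the
purchased path `P`, together with the labels of their P-edges:
`σ 0` is the first gadget with a P-edge; given `σ i`, if some gadget beyond
`σ i` has a P-edge joined to the P-edge of `σ i` by a shortcut edge then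
`σ (i+1)` is the largest such gadget, and otherwise `σ i` is an end point and
`σ (i+1)` is the next gadget after `σ i` having a P-edge; the process stops at
`σ (r-1)`, which is an end point, with no P-edge beyond it. -/
structure SigSeq (I : LabelCover) (P : List (Edge I.m I.k)) where
  r : ℕ
  rpos : 0 < r
  σ : Fin r → Fin I.m
  lab : Fin r → Fin I.k × Fin I.k
  mono : StrictMono σ
  mem : ∀ i, Edge.price (σ i) (lab i) ∈ P
  first : ∀ g, I.HasPEdge P g → σ ⟨0, rpos⟩ ≤ g
  step : ∀ i : ℕ, ∀ h : i + 1 < r,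
    (I.Linked P (σ ⟨i, Nat.lt_of_succ_lt h⟩) (lab ⟨i, Nat.lt_of_succ_lt h⟩) (σ ⟨i + 1, h⟩) ∧
      ∀ g, I.Linked P (σ ⟨i, Nat.lt_of_succ_lt h⟩) (lab ⟨i, Nat.lt_of_succ_lt h⟩) g →
        g ≤ σ ⟨i + 1, h⟩) ∨
    ((¬ ∃ g, I.Linked P (σ ⟨i, Nat.lt_of_succ_lt h⟩) (lab ⟨i, Nat.lt_of_succ_lt h⟩) g) ∧
      I.HasPEdge P (σ ⟨i + 1, h⟩) ∧
      ∀ g, σ ⟨i, Nat.lt_of_succ_lt h⟩ < g → I.HasPEdge P g → σ ⟨i + 1, h⟩ ≤ g)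
  last : ¬ ∃ g, I.Linked P (σ ⟨r - 1, by omega⟩) (lab ⟨r - 1, by omega⟩) g
  cover : ∀ g, I.HasPEdge P g → g ≤ σ ⟨r - 1, by omega⟩

/-- Significant gadget `σ i` is an end point: no gadget has a P-edge joined to
the P-edge of `σ i` by a shortcut edge. -/
def SigSeq.IsEnd {I : LabelCover} {P : List (Edge I.m I.k)} (S : I.SigSeq P)
    (i : Fin S.r) : Prop :=
  ¬ ∃ g, I.Linked P (S.σ i) (S.lab i) g

/-- Significant gadget `σ i` is a start point: it is the first significant
gadget, or its predecessor is an end point. -/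
def SigSeq.IsStart {I : LabelCover} {P : List (Edge I.m I.k)} (S : I.SigSeq P)
    (i : Fin S.r) : Prop :=
  (i : ℕ) = 0 ∨ (0 < (i : ℕ) ∧ ∃ h : (i : ℕ) - 1 < S.r, S.IsEnd ⟨(i : ℕ) - 1, h⟩)

/-- `σ α, …, σ ω` is an island: `α` is a start point, `ω` is the next end
point after `α`. -/
def SigSeq.IsIsland {I : LabelCover} {P : List (Edge I.m I.k)} (S : I.SigSeq P)
    (α ω : Fin S.r) : Prop :=
  α ≤ ω ∧ S.IsStart α ∧ S.IsEnd ω ∧ ∀ i : Fin S.r, α ≤ i → i < ω → ¬ S.IsEnd i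

end LabelCover

open LabelCover

/-!
The all-skip path costs `2m`, so the optimal path `P` has finite cost, and each segment of `P`
is a cheapest walk between its ends. Call a P-edge significant if it is the first P-edge, the
furthest P-edge conflicting with the previous significant edge, or, when the previous significant
edge conflicts with no later P-edge, the next P-edge. Comparing the segments of `P` with the skip
edges and with the shortcut from each significant edge to the next one bounds the revenue by `m`
plus twice the number of significant edges. A significant edge conflicts with no later P-edge
beyond the next significant one, so the significant edges at even and at odd positions form two
consistent sets of label pairs. A consistent set is satisfied by one labeling and has at most one
pair per edge of the label cover instance, hence at most `s` elements.
-/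

theorem ENNReal.le_natCast_of_add_natCast_le {a : ℝ≥0∞} {k n N : ℕ} (h : a + k ≤ n)
    (hn : n ≤ N + k) : a ≤ N := by
  refine (ENNReal.add_le_add_iff_right (ENNReal.natCast_ne_top k)).1 (h.trans ?_)
  exact_mod_cast hn

theorem exists_extend_of_consistent {α β γ : Type*} (T : Finset α) (f : α → β) (g : α → γ)
    (d : γ) (h : ∀ z ∈ T, ∀ w ∈ T, f z = f w → g z = g w) :
    ∃ ℓ : β → γ, ∀ z ∈ T, ℓ (f z) = g z := by
  classical
  refine ⟨fun y => if hy : ∃ z ∈ T, f z = y then g hy.choose else d, fun z hz => ?_⟩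
  have hy : ∃ w ∈ T, f w = f z := ⟨z, hz, rfl⟩
  simp only [dif_pos hy]
  exact h _ hy.choose_spec.1 _ hz hy.choose_spec.2

namespace LabelCover

variable {I : LabelCover}

section Conflict

variable {i j : Fin I.m} {a b : Fin I.k × Fin I.k}

theorem Conflict.symm (h : I.Conflict i j a b) : I.Conflict j i b a := by
  rcases h with ⟨h₁, h₂⟩ | ⟨h₁, h₂⟩
  exacts [.inl ⟨h₁.symm, h₂.symm⟩, .inr ⟨h₁.symm, h₂.symm⟩]

theorem not_conflict_self : ¬ I.Conflict i i a a := by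
  rintro (⟨-, h⟩ | ⟨-, h⟩) <;> exact h rfl

theorem conflict_self_of_ne (h : a ≠ b) : I.Conflict i i a b := by
  by_contra hc
  simp only [Conflict, true_and, not_or, not_not] at hc
  exact h (Prod.ext hc.1 hc.2)

end Conflict

def Consistent (I : LabelCover) (T : Finset (Fin I.m × (Fin I.k × Fin I.k))) : Prop :=
  ∀ z ∈ T, ∀ w ∈ T, ¬ I.Conflict z.1 w.1 z.2 w.2

def ConsistentIn (I : LabelCover) (L : List (Edge I.m I.k))
    (T : Finset (Fin I.m × (Fin I.k × Fin I.k))) : Prop :=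
  I.Consistent T ∧ ∀ z ∈ T, Edge.price z.1 z.2 ∈ L

theorem Consistent.exists_card_le_satCount {T : Finset (Fin I.m × (Fin I.k × Fin I.k))}
    (hT : I.Consistent T) (hR : ∀ z ∈ T, z.2 ∈ I.R z.1) (d : Fin I.k) :
    ∃ ℓv ℓw, T.card ≤ I.satCount ℓv ℓw := by
  classical
  obtain ⟨ℓv, hv⟩ := exists_extend_of_consistent T (I.ve ·.1) (·.2.1) d fun z hz w hw he => by
    by_contra hne; exact hT z hz w hw (.inl ⟨he, hne⟩)
  obtain ⟨ℓw, hw⟩ := exists_extend_of_consistent T (I.we ·.1) (·.2.2) d fun z hz w hw he => by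
    by_contra hne; exact hT z hz w hw (.inr ⟨he, hne⟩)
  have hinj : Set.InjOn Prod.fst (T : Set (Fin I.m × (Fin I.k × Fin I.k))) :=
    fun z hz w hw' he => by
      by_contra hne
      refine hT z hz w hw' ?_
      rw [he]
      exact conflict_self_of_ne fun h => hne (Prod.ext he h)
  refine ⟨ℓv, ℓw, ?_⟩
  rw [← Finset.card_image_of_injOn hinj]
  refine Finset.card_le_card fun i hi => ?_
  obtain ⟨z, hz, rfl⟩ := Finset.mem_image.1 hi
  simpa [Sat, hv z hz, hw z hz] using hR z hz

theorem ConsistentIn.mono {L L' : List (Edge I.m I.k)}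
    {T : Finset (Fin I.m × (Fin I.k × Fin I.k))} (hT : I.ConsistentIn L T) (h : L ⊆ L') :
    I.ConsistentIn L' T :=
  ⟨hT.1, fun z hz => h (hT.2 z hz)⟩

theorem ConsistentIn.insert {σ : Fin I.m} {a : Fin I.k × Fin I.k} {W : List (Edge I.m I.k)}
    {T : Finset (Fin I.m × (Fin I.k × Fin I.k))} (hT : I.ConsistentIn W T)
    (h : ∀ z ∈ T, ¬ I.Conflict σ z.1 a z.2) :
    I.ConsistentIn (.price σ a :: W) (insert (σ, a) T) := by
  refine ⟨?_, ?_⟩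
  · simp only [Consistent, Finset.mem_insert, forall_eq_or_imp]
    exact ⟨⟨not_conflict_self, h⟩, fun z hz => ⟨fun hc => h z hz hc.symm, hT.1 z hz⟩⟩
  · simp only [Finset.mem_insert, forall_eq_or_imp, List.mem_cons, true_or, true_and]
    exact fun z hz => .inr (hT.2 z hz)

def Node.pos {m k : ℕ} : Node m k → ℕ
  | .bd i => 3 * i
  | .tl i _ => 3 * i + 1
  | .hd i _ => 3 * i + 2

theorem EdgeOK.pos_lt {e : Edge I.m I.k} (h : I.EdgeOK e) : e.src.pos < e.dst.pos := by
  cases e <;> simp only [EdgeOK, Edge.src, Edge.dst, Node.pos, Fin.val_castSucc,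
    Fin.val_succ] at h ⊢ <;> omega

theorem Edge.eq_of_src_bd {x : Fin (I.m + 1)} {e : Edge I.m I.k} (h : e.src = .bd x) :
    (∃ g a, g.castSucc = x ∧ e = .enter g a) ∨ ∃ g, g.castSucc = x ∧ e = .skip g := by
  cases e <;> simp_all [Edge.src]

theorem Edge.eq_of_src_hd {σ : Fin I.m} {a : Fin I.k × Fin I.k} {e : Edge I.m I.k}
    (h : e.src = .hd σ a) : e = .exit σ a ∨ ∃ g b, e = .shortcut σ g a b := by
  cases e <;> simp_all [Edge.src]

theorem Edge.eq_of_dst_tl {g : Fin I.m} {b : Fin I.k × Fin I.k} {e : Edge I.m I.k}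
    (h : e.dst = .tl g b) : e = .enter g b ∨ ∃ i c, e = .shortcut i g c b := by
  cases e <;> simp_all [Edge.dst]

namespace Walk

variable {u v w : Node I.m I.k} {e : Edge I.m I.k} {L L₁ L₂ : List (Edge I.m I.k)}
  {σ g : Fin I.m} {a b : Fin I.k × Fin I.k}

theorem pos_le (h : Walk I u v L) : u.pos ≤ v.pos := by
  induction h with
  | nil => exact le_rfl
  | cons he _ ih => exact he.pos_lt.le.trans ih

theorem eq_of_nil (h : Walk I u v []) : u = v := by
  cases h; rfl

theorem of_cons (h : Walk I u v (e :: L)) : u = e.src ∧ I.EdgeOK e ∧ Walk I e.dst v L := by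
  cases h with
  | cons he hw => exact ⟨rfl, he, hw⟩

theorem singleton (he : I.EdgeOK e) : Walk I e.src e.dst [e] := .cons he (.nil _)

theorem append (h₁ : Walk I u v L₁) (h₂ : Walk I v w L₂) : Walk I u w (L₁ ++ L₂) := by
  induction h₁ with
  | nil => exact h₂
  | cons he _ ih => exact .cons he (ih h₂)

theorem of_append (h : Walk I u w (L₁ ++ L₂)) : ∃ v, Walk I u v L₁ ∧ Walk I v w L₂ := by
  induction L₁ generalizing u with
  | nil => exact ⟨u, .nil u, h⟩
  | cons e L ih =>
    obtain ⟨rfl, he, hw⟩ := h.of_cons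
    obtain ⟨v, h₁, h₂⟩ := ih hw
    exact ⟨v, .cons he h₁, h₂⟩

theorem dst_unique {v' : Node I.m I.k} (h : Walk I u v L) (h' : Walk I u v' L) : v = v' := by
  induction L generalizing u with
  | nil => exact h.eq_of_nil.symm.trans h'.eq_of_nil
  | cons e L ih => exact ih h.of_cons.2.2 h'.of_cons.2.2

theorem right_of_append (h : Walk I u w (L₁ ++ L₂)) (h₁ : Walk I u v L₁) : Walk I v w L₂ := by
  obtain ⟨v', h₁', h₂⟩ := h.of_append
  rwa [h₁.dst_unique h₁']

theorem edgeOK_of_mem (h : Walk I u v L) (he : e ∈ L) : I.EdgeOK e := by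
  induction h with
  | nil => simp at he
  | cons hok _ ih =>
    rcases List.mem_cons.1 he with rfl | he
    exacts [hok, ih he]

theorem exists_eq_append_cons (h : Walk I u v L) (he : e ∈ L) :
    ∃ L₁ L₂, L = L₁ ++ e :: L₂ ∧ Walk I u e.src L₁ ∧ Walk I e.dst v L₂ := by
  obtain ⟨L₁, L₂, rfl⟩ := List.append_of_mem he
  obtain ⟨w, h₁, h₂⟩ := h.of_append
  obtain ⟨rfl, -, h₂⟩ := h₂.of_cons
  exact ⟨L₁, L₂, rfl, h₁, h₂⟩

theorem lt_of_price_mem (h : Walk I (.hd σ a) v L) (hg : Edge.price g b ∈ L) : σ < g := by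
  obtain ⟨L₁, -, -, h₁, -⟩ := h.exists_eq_append_cons hg
  have := h₁.pos_le
  simp only [Edge.src, Node.pos] at this
  exact Fin.lt_def.2 (by omega)

theorem eq_price_cons (h : Walk I (.tl g a) I.target L) :
    ∃ L', L = .price g a :: L' ∧ I.EdgeOK (.price g a) ∧ Walk I (.hd g a) I.target L' := by
  rcases L with _ | ⟨e, L'⟩
  · cases h.eq_of_nil
  obtain ⟨hsrc, he, hw⟩ := h.of_cons
  cases e <;> simp only [Edge.src, reduceCtorEq, Node.tl.injEq] at hsrc
  obtain ⟨rfl, rfl⟩ := hsrc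
  exact ⟨L', rfl, he, hw⟩

theorem eq_exit_cons (h : Walk I (.hd σ a) I.target L)
    (hfree : ∀ g b, Edge.price g b ∈ L → ¬ I.Conflict σ g a b) :
    ∃ L', L = .exit σ a :: L' := by
  rcases L with _ | ⟨e, L'⟩
  · cases h.eq_of_nil
  obtain ⟨hsrc, he, h'⟩ := h.of_cons
  rcases Edge.eq_of_src_hd hsrc.symm with rfl | ⟨g, b, rfl⟩
  · exact ⟨L', rfl⟩
  obtain ⟨L'', rfl, -⟩ := h'.eq_price_cons
  exact absurd he.2.2.2 (hfree g b (by simp))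

theorem exists_eq_cons_append (h : Walk I (.hd σ a) (.tl g b) L)
    (hne : L ≠ [.shortcut σ g a b]) :
    ∃ e₁ L' e₂, L = e₁ :: (L' ++ [e₂]) ∧ e₁.src = .hd σ a ∧ I.EdgeOK e₁ ∧
      Walk I e₁.dst e₂.src L' ∧ I.EdgeOK e₂ ∧ e₂.dst = .tl g b := by
  rcases L with _ | ⟨e₁, L₁⟩
  · cases h.eq_of_nil
  obtain ⟨hsrc, he₁, h₁⟩ := h.of_cons
  rcases List.eq_nil_or_concat L₁ with rfl | ⟨L', e₂, rfl⟩
  · have hdst := h₁.eq_of_nil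
    rcases Edge.eq_of_src_hd hsrc.symm with rfl | ⟨g', b', rfl⟩
    · simp [Edge.dst] at hdst
    · simp only [Edge.dst, Node.tl.injEq] at hdst
      obtain ⟨rfl, rfl⟩ := hdst
      exact absurd rfl hne
  rw [List.concat_eq_append] at h₁
  obtain ⟨w, h', he₂⟩ := h₁.of_append
  obtain ⟨rfl, he₂, hnil⟩ := he₂.of_cons
  exact ⟨e₁, L', e₂, by simp, hsrc.symm, he₁, h', he₂, hnil.eq_of_nil⟩

end Walk

variable {p : Pricing I}

section Cost

variable {L L₁ L₂ : List (Edge I.m I.k)} {e : Edge I.m I.k} {g : Fin I.m}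
  {a : Fin I.k × Fin I.k}

@[simp] theorem cost_nil : I.cost p [] = 0 := rfl

@[simp] theorem cost_cons : I.cost p (e :: L) = I.edgeCost p e + I.cost p L := by
  simp [cost]

@[simp] theorem cost_append : I.cost p (L₁ ++ L₂) = I.cost p L₁ + I.cost p L₂ := by
  simp [cost]

@[simp] theorem revenue_nil : I.revenue p [] = 0 := rfl

@[simp] theorem revenue_cons : I.revenue p (e :: L) = I.priceOf p e + I.revenue p L := by
  simp [revenue]

@[simp] theorem revenue_append :
    I.revenue p (L₁ ++ L₂) = I.revenue p L₁ + I.revenue p L₂ := by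
  simp [revenue]

@[simp] theorem priceOf_price : I.priceOf p (.price g a) = p g a := rfl

@[simp] theorem priceOf_exit : I.priceOf p (.exit g a) = 0 := rfl

@[simp] theorem priceOf_shortcut {i j : Fin I.m} {a b : Fin I.k × Fin I.k} :
    I.priceOf p (.shortcut i j a b) = 0 := rfl

@[simp] theorem edgeCost_enter : I.edgeCost p (.enter g a) = 0 := by
  simp [edgeCost, Edge.fixedCost, priceOf]

@[simp] theorem edgeCost_price : I.edgeCost p (.price g a) = p g a := by
  simp [edgeCost, Edge.fixedCost]

@[simp] theorem edgeCost_exit : I.edgeCost p (.exit g a) = 0 := by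
  simp [edgeCost, Edge.fixedCost]

@[simp] theorem edgeCost_skip : I.edgeCost p (.skip g) = 2 := by
  simp [edgeCost, Edge.fixedCost, priceOf]

@[simp] theorem edgeCost_shortcut {i j : Fin I.m} {a b : Fin I.k × Fin I.k} :
    I.edgeCost p (.shortcut i j a b) = ((j - i - 1 : ℕ) : ℝ≥0∞) := by
  simp [edgeCost, Edge.fixedCost]

theorem edgeCost_eq_of_priceOf_eq_zero {n : ℕ} (hf : e.fixedCost = n) (hp : I.priceOf p e = 0) :
    I.edgeCost p e = n := by
  rw [edgeCost, hf, hp, add_zero]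

theorem cost_eq_fixedSum_add_revenue : I.cost p L = I.fixedSum L + I.revenue p L := by
  simp only [cost, fixedSum, revenue, ← List.sum_map_add]
  rfl

end Cost

theorem exists_walk_bd_bd (x y : Fin (I.m + 1)) (hxy : x ≤ y) :
    ∃ M, Walk I (.bd x) (.bd y) M ∧ I.cost p M = ((2 * (y - x : ℕ) : ℕ) : ℝ≥0∞) := by
  induction y using Fin.induction with
  | zero => exact ⟨[], by rw [Fin.le_zero_iff.1 hxy]; exact .nil _, by simp⟩
  | succ i ih =>
    rcases hxy.lt_or_eq with hlt | rfl
    · obtain ⟨M, hM, hc⟩ := ih (Fin.le_castSucc_iff.2 hlt)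
      refine ⟨M ++ [.skip i], hM.append (by exact Walk.singleton (e := .skip i) trivial), ?_⟩
      have : (x : ℕ) ≤ i := Fin.le_castSucc_iff.2 hlt
      simp only [cost_append, hc, cost_cons, edgeCost_skip, cost_nil, add_zero, Fin.val_succ,
        Fin.val_castSucc]
      norm_cast
      omega
    · exact ⟨[], .nil _, by simp⟩

theorem exists_walk_bd_tl {x : Fin (I.m + 1)} {g : Fin I.m} {b : Fin I.k × Fin I.k}
    (hb : b ∈ I.R g) (hxg : (x : ℕ) ≤ g) :
    ∃ M, Walk I (.bd x) (.tl g b) M ∧ I.cost p M = ((2 * (g - x : ℕ) : ℕ) : ℝ≥0∞) := by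
  obtain ⟨M, hM, hc⟩ := exists_walk_bd_bd (p := p) x g.castSucc (Fin.le_def.2 hxg)
  refine ⟨M ++ [.enter g b], hM.append (by exact Walk.singleton (e := .enter g b) hb), ?_⟩
  simp [hc]

theorem exists_walk_to_dst_of_src_hd {σ : Fin I.m} {a : Fin I.k × Fin I.k} {e : Edge I.m I.k}
    {x : Fin (I.m + 1)} (hsrc : e.src = .hd σ a) (he : I.EdgeOK e) (hx : (x : ℕ) ≤ σ) :
    ∃ δ : ℕ, e.fixedCost = δ ∧ I.priceOf p e = 0 ∧
      ∃ D, Walk I (.bd x) e.dst D ∧ I.cost p D = ((2 * (σ + 1 + δ - x : ℕ) : ℕ) : ℝ≥0∞) := by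
  rcases Edge.eq_of_src_hd hsrc with rfl | ⟨g, b, rfl⟩
  · obtain ⟨D, hD, hc⟩ := exists_walk_bd_bd (p := p) x σ.succ
      (Fin.le_def.2 (by simp only [Fin.val_succ]; omega))
    exact ⟨0, by simp [Edge.fixedCost], rfl, D, hD, by simpa using hc⟩
  · have hσg : (σ : ℕ) < g := he.1
    obtain ⟨D, hD, hc⟩ := exists_walk_bd_tl (p := p) he.2.2.1 (x := x) (by omega)
    refine ⟨g - σ - 1, rfl, rfl, D, hD, ?_⟩
    rw [hc]
    congr 3
    omega

theorem exists_free_walk_of_dst_tl {g : Fin I.m} {b : Fin I.k × Fin I.k} {e : Edge I.m I.k}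
    (hdst : e.dst = .tl g b) (he : I.EdgeOK e) :
    ∃ (L : ℕ) (x : Fin (I.m + 1)) (E : List (Edge I.m I.k)), e.fixedCost = L ∧
      I.priceOf p e = 0 ∧ (x : ℕ) + L = g ∧ Walk I e.src (.bd x) E ∧ I.cost p E = 0 := by
  rcases Edge.eq_of_dst_tl hdst with rfl | ⟨i, c, rfl⟩
  · exact ⟨0, g.castSucc, [], by simp [Edge.fixedCost], rfl, by simp, .nil _, rfl⟩
  · have hig : (i : ℕ) < g := he.1
    exact ⟨g - i - 1, i.succ, [.exit i c], rfl, rfl, by simp only [Fin.val_succ]; omega,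
      Walk.singleton (e := .exit i c) he.2.1, by simp⟩

section Optimal

variable {P A M B : List (Edge I.m I.k)} {u v w : Node I.m I.k}

theorem SplitsAt.extend {B₁ B₂ : List (Edge I.m I.k)} (h : I.SplitsAt P A M B u v)
    (hB : B = B₁ ++ B₂) (h₁ : Walk I v w B₁) : I.SplitsAt P A (M ++ B₁) B₂ u w := by
  subst hB
  exact ⟨by rw [h.1]; simp, h.2.1, h.2.2.1.append h₁, h.2.2.2.right_of_append h₁⟩

theorem SplitsAt.shift {M₁ M₂ : List (Edge I.m I.k)} (h : I.SplitsAt P A M B u v)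
    (hM : M = M₁ ++ M₂) (h₁ : Walk I u w M₁) : I.SplitsAt P (A ++ M₁) M₂ B w v := by
  subst hM
  exact ⟨by rw [h.1]; simp, h.2.1.append h₁, h.2.2.1.right_of_append h₁, h.2.2.2⟩

theorem SplitsAt.shift_all (h : I.SplitsAt P A M B u v) : I.SplitsAt P (A ++ M) [] B v v :=
  ⟨by simp [h.1], h.2.1.append h.2.2.1, .nil _, h.2.2.2⟩

namespace IsOptPath

variable (hP : I.IsOptPath p P)
include hP

theorem cost_ne_top : I.cost p P ≠ ⊤ := by
  obtain ⟨M, hM, hc⟩ := exists_walk_bd_bd (I := I) (p := p) 0 (Fin.last I.m) (Fin.zero_le _)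
  exact ne_top_of_le_ne_top (by rw [hc]; exact ENNReal.natCast_ne_top _) (hP.2 M hM)

theorem cost_le {M' : List (Edge I.m I.k)} (h : I.SplitsAt P A M B u v) (hM' : Walk I u v M') :
    I.cost p M ≤ I.cost p M' := by
  have hQ := hP.2 (A ++ M' ++ B) ((h.2.1.append hM').append h.2.2.2)
  have hfin := hP.cost_ne_top
  rw [h.1] at hQ hfin
  simp only [cost_append, ne_eq, ENNReal.add_eq_top, not_or] at hQ hfin
  exact (ENNReal.add_le_add_iff_left hfin.1.1).1 ((ENNReal.add_le_add_iff_right hfin.2).1 hQ)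

theorem cost_le_of_free {E M' : List (Edge I.m I.k)} {x : Fin (I.m + 1)}
    (h : I.SplitsAt P A M B u v) (hE : Walk I u (.bd x) E) (hE0 : I.cost p E = 0)
    (hM' : Walk I (.bd x) v M') : I.cost p M ≤ I.cost p M' := by
  simpa [hE0] using hP.cost_le h (hE.append hM')

end IsOptPath

end Optimal

/-- The bound proved by induction along `P = A ++ M ++ (e_{σ,a} :: W)`: the consumer can leave
`P` at the start `v` of `M` and reach the gadget boundary `bd x` for free, so `M` competes with
the skip edges from `bd x`. The two sets collect the significant edges of `e_{σ,a} :: W` at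
even and at odd positions. -/
def RevenueBoundFromPrice (I : LabelCover) (p : Pricing I) (P : List (Edge I.m I.k))
    (σ : Fin I.m) (a : Fin I.k × Fin I.k) (W : List (Edge I.m I.k)) : Prop :=
  ∀ (A M E : List (Edge I.m I.k)) (v : Node I.m I.k) (x : Fin (I.m + 1)),
    I.SplitsAt P A M (.price σ a :: W) v (.tl σ a) → Walk I v (.bd x) E → I.cost p E = 0 →
    (x : ℕ) ≤ σ →
    ∃ T₀ T₁, I.ConsistentIn (.price σ a :: W) T₀ ∧ I.ConsistentIn W T₁ ∧
      I.revenue p (.price σ a :: W) + I.cost p M + 1 ≤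
        ((I.m - x + (σ - x) + 2 * (T₀.card + T₁.card) : ℕ) : ℝ≥0∞)

def RevenueBoundFromBd (I : LabelCover) (p : Pricing I) (P : List (Edge I.m I.k))
    (x : Fin (I.m + 1)) (W : List (Edge I.m I.k)) : Prop :=
  ∀ A, I.SplitsAt P A [] W (.bd x) (.bd x) →
    ∃ T₀ T₁, I.ConsistentIn W T₀ ∧ I.ConsistentIn W T₁ ∧
      I.revenue p W ≤ ((I.m - x + 2 * (T₀.card + T₁.card) : ℕ) : ℝ≥0∞)

section RevenueBound

variable {P : List (Edge I.m I.k)} {σ g : Fin I.m} {a b : Fin I.k × Fin I.k}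
  {W Y Z : List (Edge I.m I.k)} {v : Node I.m I.k}

theorem exists_consistentIn_cons {L₀ L₁ : List (Edge I.m I.k)}
    {T₀ T₁ : Finset (Fin I.m × (Fin I.k × Fin I.k))} (h₀ : I.ConsistentIn L₀ T₀)
    (h₁ : I.ConsistentIn L₁ T₁) (hL₀ : L₀ ⊆ W) (hL₁ : L₁ ⊆ W) (hW : Walk I (.hd σ a) v W)
    (hfree : ∀ z ∈ T₁, ¬ I.Conflict σ z.1 a z.2) :
    ∃ S₀ S₁, I.ConsistentIn (.price σ a :: W) S₀ ∧ I.ConsistentIn W S₁ ∧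
      S₀.card + S₁.card = T₀.card + T₁.card + 1 := by
  have hσ : (σ, a) ∉ T₁ := fun h => (hW.lt_of_price_mem (hL₁ (h₁.2 _ h))).false
  refine ⟨insert (σ, a) T₁, T₀, (h₁.mono hL₁).insert hfree, h₀.mono hL₀, ?_⟩
  rw [Finset.card_insert_of_notMem hσ]
  ring

theorem not_conflict_of_le_furthest {T : Finset (Fin I.m × (Fin I.k × Fin I.k))}
    (hmax : ∀ g' b', Edge.price g' b' ∈ W → I.Conflict σ g' a b' → g' ≤ g)
    (hZ : Walk I (.hd g b) v Z) (hZW : Z ⊆ W) (hT : I.ConsistentIn Z T) :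
    ∀ z ∈ T, ¬ I.Conflict σ z.1 a z.2 := fun z hz hc =>
  (hmax _ _ (hZW (hT.2 z hz)) hc).not_gt (hZ.lt_of_price_mem (hT.2 z hz))

theorem exists_furthest_conflict (h : ∃ g b, Edge.price g b ∈ W ∧ I.Conflict σ g a b) :
    ∃ g b, Edge.price g b ∈ W ∧ I.Conflict σ g a b ∧
      ∀ g' b', Edge.price g' b' ∈ W → I.Conflict σ g' a b' → g' ≤ g := by
  classical
  obtain ⟨g, b, h⟩ := h
  obtain ⟨z, hz, hmax⟩ := Finset.exists_max_image
    (Finset.univ.filter fun z : Fin I.m × (Fin I.k × Fin I.k) =>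
      Edge.price z.1 z.2 ∈ W ∧ I.Conflict σ z.1 a z.2) Prod.fst ⟨(g, b), by simpa using h⟩
  exact ⟨z.1, z.2, (Finset.mem_filter.1 hz).2.1, (Finset.mem_filter.1 hz).2.2,
    fun g' b' hW hc => hmax (g', b') (by simp [hW, hc])⟩

theorem revenueBoundFromBd_of_price {x : Fin (I.m + 1)}
    (hG : ∀ g b Z, Z.length < W.length → I.RevenueBoundFromPrice p P g b Z) :
    I.RevenueBoundFromBd p P x W := by
  induction W generalizing x with
  | nil => exact fun _ _ => ⟨∅, ∅, by simp [ConsistentIn, Consistent], by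
      simp [ConsistentIn, Consistent], by simp⟩
  | cons e W ih =>
    intro A hs
    obtain ⟨hsrc, he, hW⟩ := hs.2.2.2.of_cons
    rcases Edge.eq_of_src_bd hsrc.symm with ⟨g, a, rfl, rfl⟩ | ⟨g, rfl, rfl⟩
    · obtain ⟨W', rfl, -, -⟩ := hW.eq_price_cons
      obtain ⟨T₀, T₁, h₀, h₁, hrev⟩ := hG g a W' (by simp) A _ [] _ g.castSucc
        (hs.extend (B₁ := [.enter g a]) rfl (Walk.singleton he)) (.nil _) rfl le_rfl
      refine ⟨T₀, T₁, h₀.mono (by simp), h₁.mono (by simp), ?_⟩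
      simpa [priceOf] using le_self_add.trans (le_self_add.trans hrev)
    · obtain ⟨T₀, T₁, h₀, h₁, hrev⟩ := ih (fun g b Z hZ => hG g b Z (by simp; omega)) _
        (hs.extend (B₁ := [.skip g]) rfl (Walk.singleton (e := .skip g) trivial)).shift_all
      refine ⟨T₀, T₁, h₀.mono (by simp), h₁.mono (by simp), ?_⟩
      have hle : I.m - g.succ + 2 * (T₀.card + T₁.card) ≤
          I.m - g.castSucc + 2 * (T₀.card + T₁.card) := by
        simp only [Fin.val_succ, Fin.val_castSucc]
        omega
      simpa [priceOf] using hrev.trans (Nat.cast_le.2 hle)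

theorem revenueBoundFromPrice_exit (hP : I.IsOptPath p P)
    (hfree : ∀ g b, Edge.price g b ∈ W → ¬ I.Conflict σ g a b)
    (hB : I.RevenueBoundFromBd p P σ.succ W) :
    I.RevenueBoundFromPrice p P σ a (.exit σ a :: W) := by
  intro A M E v x hs hE hE0 hx
  obtain ⟨-, ha, hW⟩ := hs.2.2.2.of_cons
  have hs' := hs.extend (B₁ := [.price σ a, .exit σ a]) rfl
    (.cons ha (by exact Walk.singleton (e := .exit σ a) ha))
  obtain ⟨D, hD, hDc⟩ := exists_walk_bd_bd (p := p) x σ.succ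
    (Fin.le_def.2 (by simp only [Fin.val_succ]; omega))
  have hout := hP.cost_le_of_free hs' hE hE0 hD
  obtain ⟨T₀, T₁, h₀, h₁, hrev⟩ := hB _ hs'.shift_all
  obtain ⟨S₀, S₁, hS₀, hS₁, hcard⟩ := exists_consistentIn_cons h₀ h₁
    (List.subset_cons_self _ _) (List.subset_cons_self _ _) hW fun z hz => hfree _ _ (h₁.2 z hz)
  refine ⟨S₀, S₁, hS₀, hS₁, ?_⟩
  simp only [cost_append, cost_cons, cost_nil, edgeCost_price, edgeCost_exit, add_zero, hDc,
    Fin.val_succ] at hout hrev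
  simp only [revenue_cons, priceOf_price, priceOf_exit, zero_add, hcard]
  calc p σ a + I.revenue p W + I.cost p M + 1
      = (I.cost p M + p σ a) + I.revenue p W + 1 := by ring
    _ ≤ ((2 * (σ + 1 - x) : ℕ) : ℝ≥0∞) +
          ((I.m - (σ + 1) + 2 * (T₀.card + T₁.card) : ℕ) : ℝ≥0∞) + 1 := by gcongr
    _ = ((2 * (σ + 1 - x) + (I.m - (σ + 1) + 2 * (T₀.card + T₁.card)) + 1 : ℕ) : ℝ≥0∞) := by
      push_cast; ring
    _ ≤ _ := Nat.cast_le.2 (by omega)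

theorem revenueBoundFromPrice_shortcut (hok : I.EdgeOK (.shortcut σ g a b))
    (hmax : ∀ g' b', Edge.price g' b' ∈ W → I.Conflict σ g' a b' → g' ≤ g)
    (hW : W = .shortcut σ g a b :: .price g b :: Z)
    (hB : I.RevenueBoundFromPrice p P g b Z) : I.RevenueBoundFromPrice p P σ a W := by
  subst hW
  intro A M E v x hs hE hE0 hx
  obtain ⟨-, ha, hW⟩ := hs.2.2.2.of_cons
  obtain ⟨-, -, hZ⟩ := hW.of_cons.2.2.of_cons
  have hσg : (σ : ℕ) < g := hok.1
  have hZW : Z ⊆ .shortcut σ g a b :: .price g b :: Z :=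
    List.Subset.trans (List.subset_cons_self _ _) (List.subset_cons_self _ _)
  obtain ⟨T₀, T₁, h₀, h₁, hrev⟩ := hB A _ E v x
    (hs.extend (B₁ := [.price σ a, .shortcut σ g a b]) rfl (.cons ha (Walk.singleton hok)))
    hE hE0 (by omega)
  obtain ⟨S₀, S₁, hS₀, hS₁, hcard⟩ := exists_consistentIn_cons h₀ h₁
    (List.subset_cons_self _ _) hZW hW (not_conflict_of_le_furthest hmax hZ hZW h₁)
  refine ⟨S₀, S₁, hS₀, hS₁, ?_⟩
  simp only [cost_append, cost_cons, cost_nil, edgeCost_price, edgeCost_shortcut, add_zero,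
    revenue_cons, priceOf_price, priceOf_shortcut, zero_add] at hrev ⊢
  rw [hcard]
  refine ENNReal.le_natCast_of_add_natCast_le (k := g - σ - 1)
    (n := I.m - x + (g - x) + 2 * (T₀.card + T₁.card)) ?_ (by omega)
  calc p σ a + (p g b + I.revenue p Z) + I.cost p M + 1 + ((g - σ - 1 : ℕ) : ℝ≥0∞)
      = p g b + I.revenue p Z + (I.cost p M + (p σ a + ((g - σ - 1 : ℕ) : ℝ≥0∞))) + 1 := by
        ring
    _ ≤ _ := hrev

/-- Comparing `P` with the skip edges up to the end of `e₁` and with the shortcut from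
`e_{σ,a}` to `e_{g,b}`. -/
theorem cost_add_revenue_detour_le (hP : I.IsOptPath p P) {A M E Y' : List (Edge I.m I.k)}
    {x : Fin (I.m + 1)} {e₁ e₂ : Edge I.m I.k} {L : ℕ}
    (hs : I.SplitsAt P A M (.price σ a :: (Y ++ .price g b :: Z)) v (.tl σ a))
    (hE : Walk I v (.bd x) E) (hE0 : I.cost p E = 0) (hx : (x : ℕ) ≤ σ)
    (hok : I.EdgeOK (.shortcut σ g a b)) (hYeq : Y = e₁ :: (Y' ++ [e₂]))
    (hY : Walk I (.hd σ a) (.tl g b) Y) (h₁src : e₁.src = .hd σ a) (h₁ : I.EdgeOK e₁)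
    (hL : e₂.fixedCost = L) :
    I.cost p M + p σ a + I.revenue p Y + L ≤ ((σ - x + (g - x) + 1 : ℕ) : ℝ≥0∞) := by
  have hσg : (σ : ℕ) < g := hok.1
  obtain ⟨-, ha, -⟩ := hs.2.2.2.of_cons
  obtain ⟨δ, hδ, hp₁, D, hD, hDc⟩ := exists_walk_to_dst_of_src_hd (p := p) h₁src h₁ hx
  have hw₁ : Walk I (.hd σ a) e₁.dst [e₁] := h₁src ▸ Walk.singleton h₁
  have hout := hP.cost_le_of_free (hs.extend (B₁ := [.price σ a, e₁])
    (B₂ := Y' ++ e₂ :: .price g b :: Z) (by simp [hYeq]) (.cons ha hw₁)) hE hE0 hD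
  have hdetour := hP.cost_le ((hs.extend (B₁ := [.price σ a]) rfl
    (Walk.singleton ha)).shift_all.extend rfl hY) (Walk.singleton hok)
  have hfix : (δ : ℝ≥0∞) + L ≤ I.fixedSum Y := by
    simp [hYeq, fixedSum, hδ, hL]
  simp only [cost_append, cost_cons, cost_nil, edgeCost_price, edgeCost_shortcut,
    edgeCost_eq_of_priceOf_eq_zero hδ hp₁, add_zero, hDc, List.nil_append] at hout hdetour
  rw [cost_eq_fixedSum_add_revenue] at hdetour
  refine ENNReal.le_natCast_of_add_natCast_le (k := 2 * δ)
    (n := 2 * (σ + 1 + δ - x) + (g - σ - 1)) ?_ (by omega)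
  calc I.cost p M + p σ a + I.revenue p Y + L + ((2 * δ : ℕ) : ℝ≥0∞)
      = (I.cost p M + (p σ a + δ)) + ((δ + L) + I.revenue p Y) := by push_cast; ring
    _ ≤ ((2 * (σ + 1 + δ - x) : ℕ) : ℝ≥0∞) + ((g - σ - 1 : ℕ) : ℝ≥0∞) :=
      add_le_add hout ((add_le_add hfix le_rfl).trans hdetour)
    _ = _ := by push_cast; ring

theorem revenueBoundFromPrice_detour (hP : I.IsOptPath p P) (hok : I.EdgeOK (.shortcut σ g a b))
    (hmax : ∀ g' b', Edge.price g' b' ∈ W → I.Conflict σ g' a b' → g' ≤ g)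
    (hW : W = Y ++ .price g b :: Z) (hY : Walk I (.hd σ a) (.tl g b) Y)
    (hne : Y ≠ [.shortcut σ g a b]) (hB : I.RevenueBoundFromPrice p P g b Z) :
    I.RevenueBoundFromPrice p P σ a W := by
  subst hW
  intro A M E v x hs hE hE0 hx
  have hσg : (σ : ℕ) < g := hok.1
  obtain ⟨-, ha, hW⟩ := hs.2.2.2.of_cons
  obtain ⟨e₁, Y', e₂, hYeq, h₁src, h₁, hY', h₂, h₂dst⟩ := hY.exists_eq_cons_append hne
  obtain ⟨L, x', E', hL, hp₂, hx'g, hE', hE'0⟩ := exists_free_walk_of_dst_tl (p := p) h₂dst h₂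
  have hcore := cost_add_revenue_detour_le hP hs hE hE0 hx hok hYeq hY h₁src h₁ hL
  have hw : Walk I (.hd σ a) e₂.src (e₁ :: Y') := h₁src ▸ Walk.cons h₁ hY'
  have hs' := (hs.extend (B₁ := .price σ a :: Y) rfl (.cons ha hY)).shift
    (M₁ := M ++ .price σ a :: e₁ :: Y') (M₂ := [e₂]) (by simp [hYeq])
    (hs.2.2.1.append (.cons ha hw))
  obtain ⟨T₀, T₁, h₀, h₁, hrev⟩ := hB _ _ E' _ x' hs' hE' hE'0 (by omega)
  obtain ⟨-, -, hZ⟩ := hs'.2.2.2.of_cons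
  have hgW : .price g b :: Z ⊆ Y ++ .price g b :: Z := List.subset_append_right _ _
  have hZW : Z ⊆ Y ++ .price g b :: Z := List.Subset.trans (List.subset_cons_self _ _) hgW
  obtain ⟨S₀, S₁, hS₀, hS₁, hcard⟩ := exists_consistentIn_cons h₀ h₁ hgW hZW hW
    (not_conflict_of_le_furthest hmax hZ hZW h₁)
  refine ⟨S₀, S₁, hS₀, hS₁, ?_⟩
  simp only [cost_cons, cost_nil, edgeCost_eq_of_priceOf_eq_zero hL hp₂, add_zero] at hrev
  rw [hcard]
  refine ENNReal.le_natCast_of_add_natCast_le (k := 2 * L)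
    (n := σ - x + (g - x) + 1 + (I.m - x' + (g - x') + 2 * (T₀.card + T₁.card))) ?_ (by omega)
  calc I.revenue p (.price σ a :: (Y ++ .price g b :: Z)) + I.cost p M + 1 + ((2 * L : ℕ) : ℝ≥0∞)
      = (I.cost p M + p σ a + I.revenue p Y + L) +
          (I.revenue p (.price g b :: Z) + L + 1) := by
        simp only [revenue_cons, revenue_append, priceOf_price]; push_cast; ring
    _ ≤ _ := (add_le_add hcore hrev).trans_eq (Nat.cast_add _ _).symm

theorem revenueBoundFromPrice (hP : I.IsOptPath p P) (σ : Fin I.m) (a : Fin I.k × Fin I.k)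
    (W : List (Edge I.m I.k)) : I.RevenueBoundFromPrice p P σ a W := by
  induction hn : W.length using Nat.strong_induction_on generalizing σ a W with
  | _ n ih =>
  subst hn
  have IH (g b) (Z : List (Edge I.m I.k)) (hZ : Z.length < W.length) :
      I.RevenueBoundFromPrice p P g b Z := ih _ hZ g b Z rfl
  intro A M E v x hs
  obtain ⟨-, ha, hW⟩ := hs.2.2.2.of_cons
  by_cases hS : ∃ g b, Edge.price g b ∈ W ∧ I.Conflict σ g a b
  · obtain ⟨g, b, hgW, hc, hmax⟩ := exists_furthest_conflict hS
    obtain ⟨Y, Z, hWeq, hY, -⟩ := hW.exists_eq_append_cons hgW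
    have hok : I.EdgeOK (.shortcut σ g a b) :=
      ⟨hW.lt_of_price_mem hgW, ha, hW.edgeOK_of_mem hgW, hc⟩
    have hZ : Z.length < W.length := by simp [hWeq]; omega
    by_cases hYs : Y = [.shortcut σ g a b]
    · exact revenueBoundFromPrice_shortcut hok hmax (by simp [hWeq, hYs]) (IH g b Z hZ)
        A M E v x hs
    · exact revenueBoundFromPrice_detour hP hok hmax hWeq hY hYs (IH g b Z hZ) A M E v x hs
  · push Not at hS
    obtain ⟨W₂, rfl⟩ := hW.eq_exit_cons hS
    refine revenueBoundFromPrice_exit hP (fun g b h => hS g b (List.mem_cons_of_mem _ h))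
      (revenueBoundFromBd_of_price fun g b Z hZ => IH g b Z ?_) A M E v x hs
    simp only [List.length_cons]
    omega

theorem IsOptPath.exists_revenue_le (hP : I.IsOptPath p P) :
    ∃ T₀ T₁, I.ConsistentIn P T₀ ∧ I.ConsistentIn P T₁ ∧
      I.revenue p P ≤ ((I.m + 2 * (T₀.card + T₁.card) : ℕ) : ℝ≥0∞) := by
  simpa using revenueBoundFromBd_of_price (x := 0) (fun g b Z _ => revenueBoundFromPrice hP g b Z)
    [] ⟨by simp, .nil _, .nil _, hP.1⟩

end RevenueBound

theorem ConsistentIn.card_le {L : List (Edge I.m I.k)} {u v : Node I.m I.k}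
    {T : Finset (Fin I.m × (Fin I.k × Fin I.k))} {s : ℕ} (hT : I.ConsistentIn L T)
    (hL : Walk I u v L) (hs : ∀ ℓv ℓw, I.satCount ℓv ℓw ≤ s) : T.card ≤ s := by
  rcases T.eq_empty_or_nonempty with rfl | ⟨z, -⟩
  · simp
  obtain ⟨ℓv, ℓw, h⟩ :=
    hT.1.exists_card_le_satCount (fun z hz => hL.edgeOK_of_mem (hT.2 z hz)) z.2.1
  exact h.trans (hs ℓv ℓw)

end LabelCover

/-- If no label assignment satisfies more than `s` edges of the
label cover instance, then every pricing of the constructed StackSP instance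
yields revenue at most `m + 4s`. -/
theorem stackSP_revenue_upper_bound (I : LabelCover) (s : ℕ)
    (hs : ∀ (ℓv : I.V → Fin I.k) (ℓw : I.W → Fin I.k), I.satCount ℓv ℓw ≤ s)
    (p : Pricing I) (P : List (Edge I.m I.k)) (hP : I.IsPurchased p P) :
    I.revenue p P ≤ (I.m : ℝ≥0∞) + 4 * (s : ℝ≥0∞) := by
  obtain ⟨T₀, T₁, h₀, h₁, hrev⟩ := hP.1.exists_revenue_le
  have hT₀ := h₀.card_le hP.1.1 hs
  have hT₁ := h₁.card_le hP.1.1 hs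
  calc I.revenue p P ≤ ((I.m + 2 * (T₀.card + T₁.card) : ℕ) : ℝ≥0∞) := hrev
    _ ≤ ((I.m + 4 * s : ℕ) : ℝ≥0∞) := Nat.cast_le.2 (by omega)
    _ = (I.m : ℝ≥0∞) + 4 * (s : ℝ≥0∞) := by push_cast; ring
end

section
/- Let σ_1 < σ_2 < … < σ_r be the significant gadgets for the purchased minimum-cost s-t path P, and for each i let (κ_i, λ_i) be the label pair of the P-edge of gadget σ_i. Then the label pairs of the odd-indexed significant gadgets (κ_1,λ_1), (κ_3,λ_3), (κ_5,λ_5), … are pairwise non-conflicting, and consequently there exists a label assignment ℓ:V∪W→L with ℓ(v_{σ_i}) = κ_i and ℓ(w_{σ_i}) = λ_i for all odd i, which satisfies at least ⌈r/2⌉ of the edges of G. -/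
open scoped ENNReal

open LabelCover


private lemma walk_mem_edgeOK {I : LabelCover} {u v : Node I.m I.k}
    {es : List (Edge I.m I.k)} (h : I.Walk u v es) {e : Edge I.m I.k}
    (he : e ∈ es) : I.EdgeOK e := by
  induction h with
  | nil => simp at he
  | cons hok _ ih =>
    rcases List.mem_cons.mp he with rfl | h'
    · exact hok
    · exact ih h'

/-- Let `σ 0 < σ 1 < … < σ (r-1)` be the significant gadgets for
the purchased minimum-cost `s`-`t` path `P`, with label pairs `lab i` on their
P-edges. Then the label pairs of the odd-indexed significant gadgets (indices
`0, 2, 4, …` in 0-based counting, i.e. `σ_1, σ_3, σ_5, …` in the 1-based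
counting of the paper) are pairwise non-conflicting, and consequently there is
a label assignment `(ℓv, ℓw)` with `ℓv (v_{σ i}) = (lab i).1` and
`ℓw (w_{σ i}) = (lab i).2` for all those `i`, which satisfies at least
`⌈r/2⌉` of the edges of the label cover instance. -/
theorem stackSP_odd_significant_gadgets (I : LabelCover) (p : Pricing I)
    (P : List (Edge I.m I.k)) (hP : I.IsPurchased p P) (hoff : I.OffPathInfty p P)
    (S : I.SigSeq P) :
    (∀ i j : Fin S.r, i ≠ j → Even (i : ℕ) → Even (j : ℕ) →
      ¬ I.Conflict (S.σ i) (S.σ j) (S.lab i) (S.lab j)) ∧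
    ∃ (ℓv : I.V → Fin I.k) (ℓw : I.W → Fin I.k),
      (∀ i : Fin S.r, Even (i : ℕ) →
        ℓv (I.ve (S.σ i)) = (S.lab i).1 ∧ ℓw (I.we (S.σ i)) = (S.lab i).2) ∧
      (S.r + 1) / 2 ≤ I.satCount ℓv ℓw := by
  classical
  obtain ⟨⟨hwalk, -⟩, -⟩ := hP
  have hmemR : ∀ i : Fin S.r, S.lab i ∈ I.R (S.σ i) := fun i =>
    walk_mem_edgeOK hwalk (S.mem i)
  -- key asymmetric version
  have key : ∀ i j : Fin S.r, (i : ℕ) < (j : ℕ) → Even (i : ℕ) → Even (j : ℕ) →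
      ¬ I.Conflict (S.σ i) (S.σ j) (S.lab i) (S.lab j) := by
    intro i j hij hei hej hc
    have hjr : (j : ℕ) < S.r := j.isLt
    have hi1 : (i : ℕ) + 1 < S.r := by omega
    have hji : (i : ℕ) + 2 ≤ (j : ℕ) := by
      rw [Nat.even_iff] at hei hej; omega
    have hσlt : S.σ i < S.σ j := S.mono (show i < j from hij)
    have hlinked : I.Linked P (S.σ i) (S.lab i) (S.σ j) :=
      ⟨S.lab j, S.mem j, hσlt, hmemR i, hmemR j, hc⟩
    have hstep := S.step (i : ℕ) hi1
    have heta : (⟨(i : ℕ), Nat.lt_of_succ_lt hi1⟩ : Fin S.r) = i := rfl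
    rw [heta] at hstep
    rcases hstep with ⟨-, hmax⟩ | ⟨hno, -, -⟩
    · have hle : S.σ j ≤ S.σ ⟨(i : ℕ) + 1, hi1⟩ := hmax _ hlinked
      have : j ≤ (⟨(i : ℕ) + 1, hi1⟩ : Fin S.r) := S.mono.le_iff_le.mp hle
      have : (j : ℕ) ≤ (i : ℕ) + 1 := this
      omega
    · exact hno ⟨_, hlinked⟩
  have part1 : ∀ i j : Fin S.r, i ≠ j → Even (i : ℕ) → Even (j : ℕ) →
      ¬ I.Conflict (S.σ i) (S.σ j) (S.lab i) (S.lab j) := by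
    intro i j hne hei hej hc
    rcases lt_trichotomy (i : ℕ) (j : ℕ) with h | h | h
    · exact key i j h hei hej hc
    · exact hne (Fin.ext h)
    · refine key j i h hej hei ?_
      rcases hc with ⟨h1, h2⟩ | ⟨h1, h2⟩
      · exact Or.inl ⟨h1.symm, h2.symm⟩
      · exact Or.inr ⟨h1.symm, h2.symm⟩
  refine ⟨part1, ?_⟩
  set i0 : Fin S.r := ⟨0, S.rpos⟩ with hi0
  let d : Fin I.k := (S.lab i0).1
  let ℓv : I.V → Fin I.k := fun v =>
    if h : ∃ i : Fin S.r, Even (i : ℕ) ∧ I.ve (S.σ i) = v then (S.lab h.choose).1 else d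
  let ℓw : I.W → Fin I.k := fun w =>
    if h : ∃ i : Fin S.r, Even (i : ℕ) ∧ I.we (S.σ i) = w then (S.lab h.choose).2 else d
  have hℓv : ∀ i : Fin S.r, Even (i : ℕ) → ℓv (I.ve (S.σ i)) = (S.lab i).1 := by
    intro i hi
    have h : ∃ j : Fin S.r, Even (j : ℕ) ∧ I.ve (S.σ j) = I.ve (S.σ i) := ⟨i, hi, rfl⟩
    have hch := h.choose_spec
    show (if h' : ∃ j : Fin S.r, Even (j : ℕ) ∧ I.ve (S.σ j) = I.ve (S.σ i) then
        (S.lab h'.choose).1 else d) = (S.lab i).1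
    rw [dif_pos h]
    by_cases hci : h.choose = i
    · rw [hci]
    · by_contra hne
      exact part1 h.choose i hci hch.1 hi (Or.inl ⟨hch.2, hne⟩)
  have hℓw : ∀ i : Fin S.r, Even (i : ℕ) → ℓw (I.we (S.σ i)) = (S.lab i).2 := by
    intro i hi
    have h : ∃ j : Fin S.r, Even (j : ℕ) ∧ I.we (S.σ j) = I.we (S.σ i) := ⟨i, hi, rfl⟩
    have hch := h.choose_spec
    show (if h' : ∃ j : Fin S.r, Even (j : ℕ) ∧ I.we (S.σ j) = I.we (S.σ i) then
        (S.lab h'.choose).2 else d) = (S.lab i).2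
    rw [dif_pos h]
    by_cases hci : h.choose = i
    · rw [hci]
    · by_contra hne
      exact part1 h.choose i hci hch.1 hi (Or.inr ⟨hch.2, hne⟩)
  refine ⟨ℓv, ℓw, fun i hi => ⟨hℓv i hi, hℓw i hi⟩, ?_⟩
  -- counting
  have hsat : ∀ j : Fin ((S.r + 1) / 2), I.Sat ℓv ℓw
      (S.σ ⟨2 * (j : ℕ), by have := j.isLt; omega⟩) := by
    intro j
    set ij : Fin S.r := ⟨2 * (j : ℕ), by have := j.isLt; omega⟩ with hij
    have he : Even ((ij : ℕ)) := ⟨(j : ℕ), by simp [hij]; ring⟩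
    unfold LabelCover.Sat
    rw [hℓv ij he, hℓw ij he]
    simpa using hmemR ij
  have hinj : Function.Injective
      (fun j : Fin ((S.r + 1) / 2) =>
        S.σ ⟨2 * (j : ℕ), by have := j.isLt; omega⟩) := by
    intro j j' hjj
    have := S.mono.injective hjj
    have h2 : 2 * (j : ℕ) = 2 * (j' : ℕ) := congrArg Fin.val this
    exact Fin.ext (by omega)
  calc (S.r + 1) / 2 = (Finset.univ : Finset (Fin ((S.r + 1) / 2))).card := by simp
    _ ≤ _ := Finset.card_le_card_of_injOn
        (fun j => S.σ ⟨2 * (j : ℕ), by have := j.isLt; omega⟩)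
        (fun j _ => Finset.mem_filter.mpr ⟨Finset.mem_univ _, hsat j⟩)
        (hinj.injOn)
end

section
/- In the StackSP instance produced by the reduction from a label cover instance with m edges (each R_i nonempty), consider the pricing assigning price 1 to every pricable edge. Then the minimum cost of a directed s-t path equals m, and there exists a minimum-cost s-t path that contains exactly one pricable edge from each of the m gadgets, so this pricing achieves revenue m. -/
open scoped ENNReal

open LabelCover

namespace LabelCover

lemma Walk.append' (I : LabelCover) {u v w : Node I.m I.k} {es fs : List (Edge I.m I.k)}
    (h1 : Walk I u v es) (h2 : Walk I v w fs) : Walk I u w (es ++ fs) := by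
  induction h1 with
  | nil => exact h2
  | cons hok _ ih => exact Walk.cons hok (ih h2)

/-- chosen label pair in each gadget -/
noncomputable def pick (I : LabelCover) (i : Fin I.m) : Fin I.k × Fin I.k :=
  (I.R_nonempty i).choose

lemma pick_mem (I : LabelCover) (i : Fin I.m) : I.pick i ∈ I.R i :=
  (I.R_nonempty i).choose_spec

noncomputable def gadgetPath (I : LabelCover) (i : Fin I.m) : List (Edge I.m I.k) :=
  [.enter i (I.pick i), .price i (I.pick i), .exit i (I.pick i)]

lemma gadget_walk (I : LabelCover) (i : Fin I.m) :
    Walk I (.bd i.castSucc) (.bd i.succ) (I.gadgetPath i) := by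
  refine Walk.cons (e := .enter i (I.pick i)) (I.pick_mem i) ?_
  refine Walk.cons (e := .price i (I.pick i)) (I.pick_mem i) ?_
  exact Walk.cons (e := .exit i (I.pick i)) (I.pick_mem i) (Walk.nil _)

noncomputable def build (I : LabelCover) : (n : ℕ) → n ≤ I.m → List (Edge I.m I.k)
  | 0, _ => []
  | n+1, h => I.gadgetPath ⟨I.m - (n+1), by omega⟩ ++ I.build n (by omega)

lemma build_walk (I : LabelCover) : ∀ (n : ℕ) (h : n ≤ I.m) (j : Fin (I.m + 1)),
    (j : ℕ) = I.m - n → Walk I (.bd j) I.target (I.build n h)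
  | 0, _, j, hj => by
      have hjl : j = Fin.last I.m := Fin.ext (by simpa using hj)
      subst hjl
      exact Walk.nil _
  | n+1, h, j, hj => by
      have hlt : I.m - (n+1) < I.m := by omega
      have hj' : j = Fin.castSucc ⟨I.m - (n+1), hlt⟩ := Fin.ext (by simpa using hj)
      subst hj'
      have w2 := I.build_walk n (by omega) (Fin.succ ⟨I.m - (n+1), hlt⟩)
        (by simp [Fin.succ]; omega)
      exact Walk.append' I (I.gadget_walk ⟨I.m - (n+1), hlt⟩) w2

lemma cost_append_s15 (I : LabelCover) (p : Pricing I) (es fs : List (Edge I.m I.k)) :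
    I.cost p (es ++ fs) = I.cost p es + I.cost p fs := by
  simp [cost]

lemma revenue_append_s15 (I : LabelCover) (p : Pricing I) (es fs : List (Edge I.m I.k)) :
    I.revenue p (es ++ fs) = I.revenue p es + I.revenue p fs := by
  simp [revenue]

lemma cost_gadget (I : LabelCover) (p : Pricing I) (hp : ∀ i a, p i a = 1) (i : Fin I.m) :
    I.cost p (I.gadgetPath i) = 1 := by
  simp [cost, gadgetPath, edgeCost, Edge.fixedCost, priceOf, hp]

lemma revenue_gadget (I : LabelCover) (p : Pricing I) (hp : ∀ i a, p i a = 1) (i : Fin I.m) :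
    I.revenue p (I.gadgetPath i) = 1 := by
  simp [revenue, gadgetPath, priceOf, hp]

lemma cost_build (I : LabelCover) (p : Pricing I) (hp : ∀ i a, p i a = 1) :
    ∀ (n : ℕ) (h : n ≤ I.m), I.cost p (I.build n h) = (n : ℝ≥0∞)
  | 0, _ => by simp [build, cost]
  | n+1, h => by
      rw [build, cost_append_s15, cost_gadget I p hp, cost_build I p hp n (by omega)]
      push_cast; ring

lemma revenue_build (I : LabelCover) (p : Pricing I) (hp : ∀ i a, p i a = 1) :
    ∀ (n : ℕ) (h : n ≤ I.m), I.revenue p (I.build n h) = (n : ℝ≥0∞)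
  | 0, _ => by simp [build, revenue]
  | n+1, h => by
      rw [build, revenue_append_s15, revenue_gadget I p hp, revenue_build I p hp n (by omega)]
      push_cast; ring

lemma countP_gadget (I : LabelCover) (i g : Fin I.m) :
    (I.gadgetPath i).countP (Edge.isPricableOf g) = if i = g then 1 else 0 := by
  simp only [gadgetPath, List.countP_cons, List.countP_nil, Edge.isPricableOf]
  rcases eq_or_ne i g with h | h
  · simp [h]
  · simp [h]

lemma countP_build (I : LabelCover) : ∀ (n : ℕ) (h : n ≤ I.m) (g : Fin I.m),
    (I.build n h).countP (Edge.isPricableOf g) = if I.m - n ≤ (g : ℕ) then 1 else 0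
  | 0, _, g => by
      have hg := g.isLt
      simp only [build, List.countP_nil]
      rw [if_neg (by omega)]
  | n+1, h, g => by
      rw [build, List.countP_append, countP_gadget, countP_build I n (by omega) g]
      have hg := g.isLt
      rcases eq_or_ne (⟨I.m - (n+1), by omega⟩ : Fin I.m) g with he | he
      · have hv : I.m - (n+1) = (g : ℕ) := by rw [← he]
        rw [if_pos he, if_neg (by omega), if_pos (by omega)]
      · have hv : I.m - (n+1) ≠ (g : ℕ) := fun hc => he (Fin.ext hc)
        rw [if_neg he]
        split_ifs with h1 h2 h2 <;> omega

/-- potential for the lower bound -/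
def pot {m k : ℕ} : Node m k → ℕ
  | .bd i => i
  | .tl i _ => i
  | .hd i _ => i + 1

lemma pot_edge (I : LabelCover) (p : Pricing I) (hp : ∀ i a, p i a = 1)
    (e : Edge I.m I.k) (he : I.EdgeOK e) :
    (pot e.dst : ℝ≥0∞) ≤ (pot e.src : ℝ≥0∞) + I.edgeCost p e := by
  cases e with
  | enter i a => simp [Edge.src, Edge.dst, pot, edgeCost, Edge.fixedCost, priceOf]
  | price i a =>
      simp [Edge.src, Edge.dst, pot, edgeCost, Edge.fixedCost, priceOf, hp]
  | exit i a =>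
      simp [Edge.src, Edge.dst, pot, edgeCost, Edge.fixedCost, priceOf, Fin.succ]
  | skip i =>
      simp only [Edge.src, Edge.dst, pot, edgeCost, Edge.fixedCost, priceOf, add_zero, Fin.succ]
      calc ((((i:ℕ) + 1 : ℕ)) : ℝ≥0∞) = ((i:ℕ) : ℝ≥0∞) + 1 := by push_cast; ring
        _ ≤ ((i:ℕ) : ℝ≥0∞) + 2 := by gcongr <;> norm_num
  | shortcut i j a b =>
      obtain ⟨hij, -⟩ := he
      simp only [Edge.src, Edge.dst, pot, edgeCost, Edge.fixedCost, priceOf, add_zero]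
      rw [← Nat.cast_add, Nat.cast_le]
      omega

lemma pot_walk (I : LabelCover) (p : Pricing I) (hp : ∀ i a, p i a = 1)
    {u v : Node I.m I.k} {es : List (Edge I.m I.k)} (w : Walk I u v es) :
    (pot v : ℝ≥0∞) ≤ (pot u : ℝ≥0∞) + I.cost p es := by
  induction w with
  | nil => simp [cost]
  | cons hok _ ih =>
      calc (pot _ : ℝ≥0∞) ≤ _ + I.cost p _ := ih
        _ ≤ ((pot _ : ℝ≥0∞) + I.edgeCost p _) + I.cost p _ := by
            gcongr; exact pot_edge I p hp _ hok
        _ = _ := by rw [add_assoc]; simp [cost]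

end LabelCover


/-- In the StackSP instance produced by the reduction (each `R i`
nonempty), under the pricing assigning price `1` to every pricable edge, the
minimum cost of a directed `s`-`t` path equals `m`, and there is a
minimum-cost `s`-`t` path containing exactly one pricable edge from each of
the `m` gadgets; hence this pricing achieves revenue `m`. -/
theorem stackSP_single_price_one (I : LabelCover) (p : Pricing I)
    (hp : ∀ i a, p i a = 1) :
    ∃ P : List (Edge I.m I.k),
      Walk I I.source I.target P ∧
      I.cost p P = (I.m : ℝ≥0∞) ∧
      (∀ Q, Walk I I.source I.target Q → (I.m : ℝ≥0∞) ≤ I.cost p Q) ∧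
      (∀ i : Fin I.m, P.countP (Edge.isPricableOf i) = 1) ∧
      I.revenue p P = (I.m : ℝ≥0∞) := by
  refine ⟨I.build I.m le_rfl, ?_, ?_, ?_, ?_, ?_⟩
  · exact I.build_walk I.m le_rfl 0 (by simp)
  · exact I.cost_build p hp I.m le_rfl
  · intro Q hQ
    have := I.pot_walk p hp hQ
    simpa [source, target, pot, Fin.last] using this
  · intro g
    have := I.countP_build I.m le_rfl g
    rw [this, if_pos (by omega)]
  · exact I.revenue_build p hp I.m le_rfl
end
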